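/- Let G be a finite simple graph with n(G) ≥ 2 such that both G and its complement \bar{G} are connected. Then gp(G\bar{G}) = n(G) + 1 if and only if rad(G) = 2 and there exists a vertex v of eccentricity 2 in G such that (i) N_G(v) is a 3-general position set in \bar{G} and N_G²(v) = {u : d_G(u,v) = 2} is a 3-general position set in G, and (ii) for each x ∈ N_G(v) there exists y ∈ N_G²(v) such that xy is not an edge of G. -/

import Mathlib

open SimpleGraph

variable {V : Type*}

/-- `v` lies on a geodesic (shortest path) between `u` and `w` in `G`. -/
def liesOnGeodesic (G : SimpleGraph V) (u v w : V) : Prop :=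
  G.Reachable u w ∧ G.dist u v + G.dist v w = G.dist u w

/-- `S` is a general position set in `G`: no element of `S` lies on a geodesic
between two other elements of `S`. -/
def isGenPosSet (G : SimpleGraph V) (S : Set V) : Prop :=
  ∀ u ∈ S, ∀ v ∈ S, ∀ w ∈ S, u ≠ v → v ≠ w → u ≠ w → ¬ liesOnGeodesic G u v w

/-- The general position number `gp(G)` of `G`. -/
noncomputable def gpNum (G : SimpleGraph V) : ℕ :=
  sSup {n : ℕ | ∃ S : Set V, isGenPosSet G S ∧ S.ncard = n}

/-- `S` is a `3`-general position set in `G`: no three vertices of `S` lie on a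
common geodesic of length at most `3`. -/
def isGP3Set (G : SimpleGraph V) (S : Set V) : Prop :=
  ∀ u ∈ S, ∀ v ∈ S, ∀ w ∈ S, u ≠ v → v ≠ w → u ≠ w →
    ¬ (liesOnGeodesic G u v w ∧ G.dist u w ≤ 3)

/-- The `3`-general position number `gp₃(G)` of `G`. -/
noncomputable def gp3Num (G : SimpleGraph V) : ℕ :=
  sSup {n : ℕ | ∃ S : Set V, isGP3Set G S ∧ S.ncard = n}

/-- The complementary prism `G\bar{G}`: the disjoint union of `G` (left copy) and
its complement `Gᶜ` (right copy), together with the perfect matching joining each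
vertex to its copy. -/
def compPrism (G : SimpleGraph V) : SimpleGraph (V ⊕ V) where
  Adj x y :=
    match x, y with
    | Sum.inl a, Sum.inl b => G.Adj a b
    | Sum.inr a, Sum.inr b => Gᶜ.Adj a b
    | Sum.inl a, Sum.inr b => a = b
    | Sum.inr a, Sum.inl b => a = b
  symm := by
    constructor
    rintro (a | a) (b | b) h
    · exact (G.adj_comm a b).mp h
    · exact Eq.symm h
    · exact Eq.symm h
    · exact (Gᶜ.adj_comm a b).mp h
  loopless := by
    constructor
    rintro (a | a) h
    · exact G.loopless.irrefl a h
    · exact Gᶜ.loopless.irrefl a h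

/-- The eccentricity of a vertex: the maximum distance to another vertex. -/
noncomputable def ecc (G : SimpleGraph V) (v : V) : ℕ :=
  sSup (Set.range (G.dist v))

/-- The radius of a graph: the minimum eccentricity. -/
noncomputable def rad (G : SimpleGraph V) : ℕ :=
  sInf (Set.range (ecc G))

/-- The diameter of a graph: the maximum distance between two vertices. -/
noncomputable def graphDiam (G : SimpleGraph V) : ℕ :=
  sSup {n : ℕ | ∃ u v : V, G.dist u v = n}

/-- `\bar{gp}₃(G)`: the maximum, over all `gp₃`-sets `S` of `G`, of the `3`-general
position number of the subgraph of `Gᶜ` induced by the vertices outside `S`. -/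
noncomputable def barGp3 (G : SimpleGraph V) : ℕ :=
  sSup {n : ℕ | ∃ S : Set V, isGP3Set G S ∧ S.ncard = gp3Num G ∧
          gp3Num ((Gᶜ).induce Sᶜ) = n}

/-- A cut vertex: its removal disconnects the graph. -/
def isCutVertex (G : SimpleGraph V) (v : V) : Prop :=
  ¬ (G.induce {u : V | u ≠ v}).Connected

/-- `B` is the vertex set of a `2`-connected subgraph of `G`:
it has at least `3` vertices and removing any one vertex leaves it connected. -/
def isTwoConnectedSet (G : SimpleGraph V) (B : Set V) : Prop :=
  3 ≤ B.ncard ∧ ∀ v ∈ B, (G.induce (B \ {v})).Connected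

/-- A block graph: every maximal `2`-connected subgraph is a clique. -/
def isBlockGraph (G : SimpleGraph V) : Prop :=
  ∀ B : Set V, isTwoConnectedSet G B →
    (∀ B' : Set V, isTwoConnectedSet G B' → B ⊆ B' → B = B') →
    G.IsClique B

/-- Complete multipartite graph: the vertices can be partitioned (via an
equivalence relation, whose classes are the parts) so that two vertices are
adjacent iff they lie in different parts. -/
def isCompleteMultipartite (G : SimpleGraph V) : Prop :=
  ∃ r : V → V → Prop, Equivalence r ∧ ∀ u v, G.Adj u v ↔ ¬ r u v

/-- The hypercube `Q_n`: binary strings of length `n`, two strings being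
adjacent when they differ in exactly one coordinate. -/
def hypercube (n : ℕ) : SimpleGraph (Fin n → Bool) where
  Adj x y := {i : Fin n | x i ≠ y i}.ncard = 1
  symm := by
    constructor
    intro x y h
    simpa [ne_comm] using h
  loopless := by
    constructor
    intro x
    simp

/-- The block graph `G_k`: a chain of `k+1` triangles `{vᵢ, uᵢ, vᵢ₊₁}`,
with the `v`-vertices `v₁, …, v_{k+2}` indexed by `Fin (k+2)` (left summand)
and the `u`-vertices `u₁, …, u_{k+1}` indexed by `Fin (k+1)` (right summand);
the edges are `vᵢvᵢ₊₁`, `uᵢvᵢ` and `uᵢvᵢ₊₁`. -/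
def Gk (k : ℕ) : SimpleGraph (Fin (k + 2) ⊕ Fin (k + 1)) where
  Adj x y :=
    match x, y with
    | Sum.inl a, Sum.inl b => a.val + 1 = b.val ∨ b.val + 1 = a.val
    | Sum.inl a, Sum.inr b => a.val = b.val ∨ a.val = b.val + 1
    | Sum.inr a, Sum.inl b => b.val = a.val ∨ b.val = a.val + 1
    | Sum.inr _, Sum.inr _ => False
  symm := by
    constructor
    rintro (a | a) (b | b) h
    · exact Or.symm h
    · exact h
    · exact h
    · exact h
  loopless := by
    constructor
    rintro (a | a) h
    · omega
    · exact h

/-!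
Inside `G\bar{G}` the two copies of `V` induce `G` and `Gᶜ`, every distance is at most `3`, and a
vertex is at distance `2` from every vertex of the other copy except its twin. So distances inside a
copy are those of `G` (resp. `Gᶜ`) truncated at `3`, and a general position set meets both copies in
at most one pair of twins `v, v̄`, whence `gp(G\bar{G}) ≤ n + 1`.

A geodesic triple that uses both copies must contain a pair of twins as consecutive vertices. In a
set `S` of size `n + 1`, containing `v, v̄`, that triple is excluded exactly when every other vertex of
`S` is at distance `2` from both `v` and `v̄`: the left part of `S` is then `{v} ∪ N²(v)`, the right
part is `{v} ∪ N(v)`, and `d_{Gᶜ}(x, v) = 2` for `x ∈ N(v)` is condition (ii). The triples inside one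
copy are excluded exactly by the `3`-general position of the two parts.
-/

namespace SimpleGraph

variable {V W : Type*} {G : SimpleGraph V} {G' : SimpleGraph W}

lemma Hom.dist_le (f : G →g G') {u v : V} (h : G.Reachable u v) :
    G'.dist (f u) (f v) ≤ G.dist u v := by
  obtain ⟨p, hp⟩ := h.exists_walk_length_eq_dist
  exact (SimpleGraph.dist_le (p.map f)).trans_eq (by rw [Walk.length_map, hp])

lemma Iso.dist_eq (e : G ≃g G') (u v : V) : G'.dist (e u) (e v) = G.dist u v := by
  by_cases h : G.Reachable u v
  · refine le_antisymm (e.toHom.dist_le h) ?_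
    simpa using e.symm.toHom.dist_le (e.reachable_iff.mpr h)
  · rw [dist_eq_zero_of_not_reachable h, dist_eq_zero_of_not_reachable (e.reachable_iff.not.mpr h)]

lemma dist_eq_two_iff {u v : V} :
    G.dist u v = 2 ↔ u ≠ v ∧ ¬G.Adj u v ∧ (G.commonNeighbors u v).Nonempty := by
  by_cases h : G.Reachable u v
  · rw [← edist_eq_two_iff, ← h.coe_dist_eq_edist]
    exact Nat.cast_inj.symm
  · rw [dist_eq_zero_of_not_reachable h]
    refine ⟨by omega, ?_⟩
    rintro ⟨-, -, w, hw⟩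
    rw [mem_commonNeighbors] at hw
    exact (h (hw.1.reachable.trans hw.2.reachable.symm)).elim

lemma Iso.liesOnGeodesic_iff (e : G ≃g G') {u v w : V} :
    liesOnGeodesic G' (e u) (e v) (e w) ↔ liesOnGeodesic G u v w := by
  simp only [liesOnGeodesic, Iso.reachable_iff, Iso.dist_eq]

end SimpleGraph

open SimpleGraph

section Geodesic

variable {V : Type*} {G : SimpleGraph V}

lemma liesOnGeodesic_comm {u v w : V} : liesOnGeodesic G u v w ↔ liesOnGeodesic G w v u := by
  simp only [liesOnGeodesic, reachable_comm, dist_comm, add_comm]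

lemma liesOnGeodesic_of_adj_of_adj {u v w : V} (huv : G.Adj u v) (hvw : G.Adj v w)
    (huw : G.dist u w = 2) : liesOnGeodesic G u v w :=
  ⟨huv.reachable.trans hvw.reachable, by
    rw [dist_eq_one_iff_adj.mpr huv, dist_eq_one_iff_adj.mpr hvw, huw]⟩

lemma not_liesOnGeodesic_of_adj {u v w : V} (huv : G.Adj u v) (huw : G.dist u w = 2)
    (hvw : G.dist v w = 2) : ¬liesOnGeodesic G u v w := by
  rintro ⟨-, h⟩
  rw [dist_eq_one_iff_adj.mpr huv] at h
  omega

lemma isGP3Set.mono {S T : Set V} (hT : isGP3Set G T) (hST : S ⊆ T) : isGP3Set G S :=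
  fun u hu v hv w hw => hT u (hST hu) v (hST hv) w (hST hw)

lemma isGP3Set.insert {S : Set V} {v : V} (hS : isGP3Set G S) (hv : ∀ u ∈ S, G.dist u v = 2) :
    isGP3Set G (insert v S) := by
  have hv' : ∀ u ∈ S, G.dist v u = 2 := fun u hu => G.dist_comm ▸ hv u hu
  have hreach : ∀ a ∈ S, G.Reachable a v := fun a ha =>
    Reachable.of_dist_ne_zero (by rw [hv a ha]; omega)
  have hpos : ∀ a ∈ S, ∀ b ∈ S, a ≠ b → 0 < G.dist a b := fun a ha b hb hab =>
    ((hreach a ha).trans (hreach b hb).symm).pos_dist_of_ne hab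
  rintro a (rfl | ha) b (rfl | hb) c (rfl | hc) hab hbc hac ⟨⟨hr, h⟩, hle⟩
  · exact hab rfl
  · exact hab rfl
  · exact hac rfl
  · rw [hv' b hb, hv' c hc] at h
    have := hpos b hb c hc hbc
    omega
  · exact hbc rfl
  · rw [hv a ha, hv' c hc] at h
    omega
  · rw [hv a ha, hv b hb] at h
    have := hpos a ha b hb hab
    omega
  · exact hS a ha b hb c hc hab hbc hac ⟨⟨hr, h⟩, hle⟩

end Geodesic

section CompPrism

variable {V : Type*} {G : SimpleGraph V}

@[simp] lemma compPrism_adj_inl_inl {a b : V} :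
    (compPrism G).Adj (.inl a) (.inl b) ↔ G.Adj a b := Iff.rfl

@[simp] lemma compPrism_adj_inr_inr {a b : V} :
    (compPrism G).Adj (.inr a) (.inr b) ↔ Gᶜ.Adj a b := Iff.rfl

@[simp] lemma compPrism_adj_inl_inr {a b : V} :
    (compPrism G).Adj (.inl a) (.inr b) ↔ a = b := Iff.rfl

@[simp] lemma compPrism_adj_inr_inl {a b : V} :
    (compPrism G).Adj (.inr a) (.inl b) ↔ a = b := Iff.rfl

lemma compPrism_adj_swap (x : V ⊕ V) : (compPrism G).Adj x x.swap := by
  cases x <;> simp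

lemma compPrism_eq_swap_of_adj {x y : V ⊕ V} (hxy : (compPrism G).Adj x y)
    (h : x.isLeft ≠ y.isLeft) : y = x.swap := by
  rcases x with a | a <;> rcases y with b | b <;> simp_all

-- Exchanging the copies reduces facts about the `inr` copy to the `inl` copy of `compPrism Gᶜ`.
variable (G) in
def compPrismComplIso : compPrism Gᶜ ≃g compPrism G where
  toEquiv := Equiv.sumComm V V
  map_rel_iff' {x y} := by
    rcases x with a | a <;> rcases y with b | b <;> simp

lemma compPrism_exists_walk_inl_inr (a b : V) :
    ∃ p : (compPrism G).Walk (.inl a) (.inr b), p.length ≤ 2 := by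
  by_cases hab : G.Adj a b
  · exact ⟨.cons (compPrism_adj_inl_inl.mpr hab) (.cons (compPrism_adj_inl_inr.mpr rfl) .nil),
      by simp⟩
  by_cases h : a = b
  · exact ⟨.cons (compPrism_adj_inl_inr.mpr h) .nil, by simp⟩
  · exact ⟨.cons (compPrism_adj_inl_inr.mpr rfl)
      (.cons (compPrism_adj_inr_inr.mpr ((compl_adj G a b).mpr ⟨h, hab⟩)) .nil), by simp⟩

lemma compPrism_exists_walk_of_isLeft_ne {x y : V ⊕ V} (h : x.isLeft ≠ y.isLeft) :
    ∃ p : (compPrism G).Walk x y, p.length ≤ 2 := by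
  rcases x with a | a <;> rcases y with b | b
  · simp at h
  · exact compPrism_exists_walk_inl_inr a b
  · obtain ⟨p, hp⟩ := compPrism_exists_walk_inl_inr (G := G) b a
    exact ⟨p.reverse, by simpa using hp⟩
  · simp at h

variable (G) in
lemma compPrism_preconnected : (compPrism G).Preconnected := by
  intro x y
  by_cases h : x.isLeft = y.isLeft
  · obtain ⟨p, -⟩ := compPrism_exists_walk_of_isLeft_ne (G := G) (x := x) (y := y.swap)
      (by cases x <;> cases y <;> simp_all)
    exact p.reachable.trans (compPrism_adj_swap y).symm.reachable
  · obtain ⟨p, -⟩ := compPrism_exists_walk_of_isLeft_ne (G := G) h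
    exact p.reachable

lemma compPrism_dist_le_two_of_isLeft_ne {x y : V ⊕ V} (h : x.isLeft ≠ y.isLeft) :
    (compPrism G).dist x y ≤ 2 := by
  obtain ⟨p, hp⟩ := compPrism_exists_walk_of_isLeft_ne (G := G) h
  exact (dist_le p).trans hp

lemma compPrism_dist_eq_two_of_isLeft_ne {x y : V ⊕ V} (h : x.isLeft ≠ y.isLeft)
    (hy : y ≠ x.swap) : (compPrism G).dist x y = 2 := by
  have hxy : x ≠ y := by rintro rfl; exact h rfl
  have := (compPrism_preconnected G x y).one_lt_dist_of_ne_of_not_adj hxy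
    fun hadj => hy (compPrism_eq_swap_of_adj hadj h)
  have := compPrism_dist_le_two_of_isLeft_ne (G := G) h
  omega

lemma compPrism_dist_le_three (x y : V ⊕ V) : (compPrism G).dist x y ≤ 3 := by
  by_cases h : x.isLeft = y.isLeft
  · have hswap : x.isLeft ≠ y.swap.isLeft := by cases x <;> cases y <;> simp_all
    calc (compPrism G).dist x y
        ≤ (compPrism G).dist x y.swap + (compPrism G).dist y.swap y :=
          (compPrism_preconnected G x y.swap).dist_triangle_left y
      _ ≤ 2 + 1 := by
          gcongr
          · exact compPrism_dist_le_two_of_isLeft_ne hswap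
          · exact (dist_eq_one_iff_adj.mpr (compPrism_adj_swap y).symm).le
  · exact (compPrism_dist_le_two_of_isLeft_ne h).trans (by norm_num)

lemma compPrism_dist_inl_inl (hG : G.Connected) {a b : V} (hab : a ≠ b) :
    (compPrism G).dist (.inl a) (.inl b) = min (G.dist a b) 3 := by
  have hpos := (compPrism_preconnected G (.inl a) (.inl b)).pos_dist_of_ne (by simpa)
  have hle : (compPrism G).dist (.inl a) (.inl b) ≤ G.dist a b :=
    Hom.dist_le ⟨Sum.inl, id⟩ (hG a b)
  have hge : (compPrism G).dist (.inl a) (.inl b) ≤ 2 →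
      G.dist a b ≤ (compPrism G).dist (.inl a) (.inl b) := by
    intro h2
    rcases (by omega : (compPrism G).dist (.inl a) (.inl b) = 1 ∨
      (compPrism G).dist (.inl a) (.inl b) = 2) with h | h
    · have hadj : G.Adj a b := compPrism_adj_inl_inl.mp (dist_eq_one_iff_adj.mp h)
      rw [h, dist_eq_one_iff_adj.mpr hadj]
    · obtain ⟨-, -, w | w, hw⟩ := dist_eq_two_iff.mp h
      · rw [mem_commonNeighbors, compPrism_adj_inl_inl, compPrism_adj_inl_inl] at hw
        exact h ▸ (dist_le (.cons hw.1 (.cons hw.2.symm .nil))).trans (by simp)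
      · rw [mem_commonNeighbors, compPrism_adj_inl_inr, compPrism_adj_inl_inr] at hw
        exact (hab (hw.1.trans hw.2.symm)).elim
  have := compPrism_dist_le_three (G := G) (.inl a) (.inl b)
  omega

lemma compPrism_dist_inr_inr (hGc : Gᶜ.Connected) {a b : V} (hab : a ≠ b) :
    (compPrism G).dist (.inr a) (.inr b) = min (Gᶜ.dist a b) 3 :=
  ((compPrismComplIso G).dist_eq (.inl a) (.inl b)).trans (compPrism_dist_inl_inl hGc hab)

lemma liesOnGeodesic_compPrism_inl_iff (hG : G.Connected) {a b c : V} (hab : a ≠ b)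
    (hbc : b ≠ c) (hac : a ≠ c) :
    liesOnGeodesic (compPrism G) (.inl a) (.inl b) (.inl c) ↔
      liesOnGeodesic G a b c ∧ G.dist a c ≤ 3 := by
  have := hG.pos_dist_of_ne hab
  have := hG.pos_dist_of_ne hbc
  have : G.dist a c ≤ G.dist a b + G.dist b c := hG.dist_triangle
  simp only [liesOnGeodesic, compPrism_dist_inl_inl hG hab, compPrism_dist_inl_inl hG hbc,
    compPrism_dist_inl_inl hG hac, compPrism_preconnected G _ _, hG.preconnected a c, true_and]
  omega

lemma liesOnGeodesic_compPrism_inr_iff (hGc : Gᶜ.Connected) {a b c : V} (hab : a ≠ b)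
    (hbc : b ≠ c) (hac : a ≠ c) :
    liesOnGeodesic (compPrism G) (.inr a) (.inr b) (.inr c) ↔
      liesOnGeodesic Gᶜ a b c ∧ Gᶜ.dist a c ≤ 3 :=
  ((compPrismComplIso G).liesOnGeodesic_iff (u := .inl a) (v := .inl b) (w := .inl c)).trans
    (liesOnGeodesic_compPrism_inl_iff hGc hab hbc hac)

lemma compPrism_eq_swap_of_liesOnGeodesic {x y z : V ⊕ V} (hxy : x ≠ y) (hyz : y ≠ z)
    (h : liesOnGeodesic (compPrism G) x y z)
    (hmix : ¬(x.isLeft = y.isLeft ∧ y.isLeft = z.isLeft)) : y = x.swap ∨ z = y.swap := by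
  have := (compPrism_preconnected G x y).pos_dist_of_ne hxy
  have := (compPrism_preconnected G y z).pos_dist_of_ne hyz
  have hsum := h.2
  have key : (x.isLeft ≠ y.isLeft ∧ (compPrism G).dist x y = 1) ∨
      (y.isLeft ≠ z.isLeft ∧ (compPrism G).dist y z = 1) := by
    by_cases hxz : x.isLeft = z.isLeft
    · have := compPrism_dist_le_three (G := G) x z
      rcases (by omega : (compPrism G).dist x y = 1 ∨ (compPrism G).dist y z = 1) with h1 | h1
      · exact .inl ⟨fun h' => hmix ⟨h', h'.symm.trans hxz⟩, h1⟩
      · exact .inr ⟨fun h' => hmix ⟨hxz.trans h'.symm, h'⟩, h1⟩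
    · have := compPrism_dist_le_two_of_isLeft_ne (G := G) hxz
      by_cases hxy' : x.isLeft = y.isLeft
      · exact .inr ⟨fun h' => hxz (hxy'.trans h'), by omega⟩
      · exact .inl ⟨hxy', by omega⟩
  rcases key with ⟨hs, h1⟩ | ⟨hs, h1⟩
  · exact .inl (compPrism_eq_swap_of_adj (dist_eq_one_iff_adj.mp h1) hs)
  · exact .inr (compPrism_eq_swap_of_adj (dist_eq_one_iff_adj.mp h1) hs)

end CompPrism

section GenPos

variable {V : Type*} {G : SimpleGraph V} {A B : Set V}

lemma ncard_image_inl_union_image_inr [Finite V] (A B : Set V) :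
    (Sum.inl '' A ∪ Sum.inr '' B).ncard = A.ncard + B.ncard := by
  rw [Set.ncard_union_eq, Set.ncard_image_of_injective _ Sum.inl_injective,
    Set.ncard_image_of_injective _ Sum.inr_injective]
  rw [Set.disjoint_left]
  rintro _ ⟨a, -, rfl⟩ ⟨b, -, h⟩
  exact Sum.inr_ne_inl h

lemma inter_subsingleton_of_isGenPosSet_compPrism
    (hS : isGenPosSet (compPrism G) (Sum.inl '' A ∪ Sum.inr '' B)) : (A ∩ B).Subsingleton := by
  intro u ⟨huA, huB⟩ w ⟨hwA, hwB⟩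
  by_contra huw
  have hdist : (compPrism G).dist (.inl u) (.inr w) = 2 :=
    compPrism_dist_eq_two_of_isLeft_ne (by simp) (by simpa using Ne.symm huw)
  by_cases hadj : G.Adj u w
  · exact hS _ (by simpa) _ (by simpa) _ (by simpa) (by simpa) (by simp) (by simp)
      (liesOnGeodesic_of_adj_of_adj (compPrism_adj_inl_inl.mpr hadj)
        (compPrism_adj_inl_inr.mpr rfl) hdist)
  · exact hS _ (by simpa) _ (by simpa) _ (by simpa) (by simp) (by simpa) (by simp)
      (liesOnGeodesic_of_adj_of_adj (compPrism_adj_inl_inr.mpr rfl)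
        (compPrism_adj_inr_inr.mpr ((compl_adj G u w).mpr ⟨huw, hadj⟩)) hdist)

lemma compPrism_dist_eq_two_of_swap_mem {S : Set (V ⊕ V)} (hS : isGenPosSet (compPrism G) S)
    {x w : V ⊕ V} (hx : x ∈ S) (hx' : x.swap ∈ S) (hw : w ∈ S) (hwx : w ≠ x)
    (hwx' : w ≠ x.swap) : (compPrism G).dist w x = 2 := by
  have hx_ne : x ≠ x.swap := by cases x <;> simp
  by_cases hside : w.isLeft = x.isLeft
  · have hswap : (compPrism G).dist w x.swap = 2 :=
      compPrism_dist_eq_two_of_isLeft_ne (by cases w <;> cases x <;> simp_all)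
        (fun h => hwx (Sum.swap_leftInverse.injective h).symm)
    have hmatch : (compPrism G).dist x x.swap = 1 := dist_eq_one_iff_adj.mpr (compPrism_adj_swap x)
    have h1 : (compPrism G).dist w x + (compPrism G).dist x x.swap ≠
        (compPrism G).dist w x.swap := fun h =>
      hS w hw x hx x.swap hx' hwx hx_ne hwx' ⟨compPrism_preconnected G _ _, h⟩
    have h2 : (compPrism G).dist w x.swap + (compPrism G).dist x.swap x ≠
        (compPrism G).dist w x := fun h =>
      hS w hw x.swap hx' x hx hwx' hx_ne.symm hwx ⟨compPrism_preconnected G _ _, h⟩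
    rw [dist_comm (u := x.swap)] at h2
    -- `h1` rules out `d(w, x) = 1` and `h2` rules out `d(w, x) = 3`
    have := (compPrism_preconnected G w x).pos_dist_of_ne hwx
    have := compPrism_dist_le_three (G := G) w x
    omega
  · exact compPrism_dist_eq_two_of_isLeft_ne hside (fun h => hwx' (by rw [h, Sum.swap_swap]))

lemma compPrism_dist_eq_two_of_mem (hG : G.Connected) (hGc : Gᶜ.Connected) {v : V}
    (hAv : ∀ a ∈ A, a ≠ v → G.dist a v = 2) (hBv : ∀ b ∈ B, b ≠ v → Gᶜ.dist b v = 2)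
    {w : V ⊕ V} (hw : w ∈ Sum.inl '' A ∪ Sum.inr '' B) (hwl : w ≠ .inl v) (hwr : w ≠ .inr v) :
    (compPrism G).dist (.inl v) w = 2 ∧ (compPrism G).dist (.inr v) w = 2 := by
  rcases hw with ⟨a, ha, rfl⟩ | ⟨b, hb, rfl⟩
  · have hav : a ≠ v := by rintro rfl; exact hwl rfl
    refine ⟨?_, compPrism_dist_eq_two_of_isLeft_ne (by simp) (by simpa using hav)⟩
    rw [compPrism_dist_inl_inl hG (Ne.symm hav), G.dist_comm, hAv a ha hav]
    rfl
  · have hbv : b ≠ v := by rintro rfl; exact hwr rfl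
    refine ⟨compPrism_dist_eq_two_of_isLeft_ne (by simp) (by simpa using hbv), ?_⟩
    rw [compPrism_dist_inr_inr hGc (Ne.symm hbv), Gᶜ.dist_comm, hBv b hb hbv]
    rfl

lemma isGenPosSet_compPrism_of (hG : G.Connected) (hGc : Gᶜ.Connected) {v : V}
    (hA : isGP3Set G A) (hB : isGP3Set Gᶜ B) (hAv : ∀ a ∈ A, a ≠ v → G.dist a v = 2)
    (hBv : ∀ b ∈ B, b ≠ v → Gᶜ.dist b v = 2) :
    isGenPosSet (compPrism G) (Sum.inl '' A ∪ Sum.inr '' B) := by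
  set S := Sum.inl '' A ∪ Sum.inr '' B
  have hAB : ∀ a ∈ A, a ∈ B → a = v := by
    intro a ha hb
    by_contra hav
    have hG2 := (dist_eq_two_iff.mp (hAv a ha hav)).2.1
    have hGc2 := (dist_eq_two_iff.mp (hBv a hb hav)).2.1
    exact hGc2 ((compl_adj G a v).mpr ⟨hav, hG2⟩)
  have hswap : ∀ x ∈ S, x.swap ∈ S → x = .inl v ∨ x = .inr v := by
    rintro (a | a) hx hx'
    · exact .inl (congrArg _ (hAB a (by simpa [S] using hx) (by simpa [S] using hx')))
    · exact .inr (congrArg _ (hAB a (by simpa [S] using hx') (by simpa [S] using hx)))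
  have hfar := fun w (hw : w ∈ S) => compPrism_dist_eq_two_of_mem hG hGc hAv hBv hw
  intro x hx y hy z hz hxy hyz hxz hgeo
  by_cases hside : x.isLeft = y.isLeft ∧ y.isLeft = z.isLeft
  · rcases hx with ⟨a, ha, rfl⟩ | ⟨a, ha, rfl⟩ <;> rcases hy with ⟨b, hb, rfl⟩ | ⟨b, hb, rfl⟩ <;>
      rcases hz with ⟨c, hc, rfl⟩ | ⟨c, hc, rfl⟩ <;> simp only [Sum.isLeft_inl, Sum.isLeft_inr,
        Bool.false_eq_true, Bool.true_eq_false, and_false, false_and, ne_eq, Sum.inl.injEq,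
        Sum.inr.injEq] at hside hxy hyz hxz
    · exact hA a ha b hb c hc hxy hyz hxz
        ((liesOnGeodesic_compPrism_inl_iff hG hxy hyz hxz).mp hgeo)
    · exact hB a ha b hb c hc hxy hyz hxz
        ((liesOnGeodesic_compPrism_inr_iff hGc hxy hyz hxz).mp hgeo)
  rcases compPrism_eq_swap_of_liesOnGeodesic hxy hyz hgeo hside with rfl | rfl
  · rcases hswap x hx hy with rfl | rfl
    · obtain ⟨h1, h2⟩ := hfar z hz (Ne.symm hxz) (Ne.symm hyz)
      exact not_liesOnGeodesic_of_adj (compPrism_adj_swap _) h1 h2 hgeo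
    · obtain ⟨h1, h2⟩ := hfar z hz (Ne.symm hyz) (Ne.symm hxz)
      exact not_liesOnGeodesic_of_adj (compPrism_adj_swap _) h2 h1 hgeo
  · rw [liesOnGeodesic_comm] at hgeo
    rcases hswap y hy hz with rfl | rfl
    · obtain ⟨h1, h2⟩ := hfar x hx hxy hxz
      exact not_liesOnGeodesic_of_adj (compPrism_adj_swap _).symm h2 h1 hgeo
    · obtain ⟨h1, h2⟩ := hfar x hx hxz hxy
      exact not_liesOnGeodesic_of_adj (compPrism_adj_swap _).symm h1 h2 hgeo

lemma isGP3Set_of_isGenPosSet_compPrism_inl (hG : G.Connected)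
    (hS : isGenPosSet (compPrism G) (Sum.inl '' A ∪ Sum.inr '' B)) : isGP3Set G A :=
  fun a ha b hb c hc hab hbc hac h => hS _ (by simpa) _ (by simpa) _ (by simpa) (by simpa)
    (by simpa) (by simpa) ((liesOnGeodesic_compPrism_inl_iff hG hab hbc hac).mpr h)

lemma isGP3Set_of_isGenPosSet_compPrism_inr (hGc : Gᶜ.Connected)
    (hS : isGenPosSet (compPrism G) (Sum.inl '' A ∪ Sum.inr '' B)) : isGP3Set Gᶜ B :=
  fun a ha b hb c hc hab hbc hac h => hS _ (by simpa) _ (by simpa) _ (by simpa) (by simpa)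
    (by simpa) (by simpa) ((liesOnGeodesic_compPrism_inr_iff hGc hab hbc hac).mpr h)

lemma dist_eq_two_of_isGenPosSet_compPrism_inl (hG : G.Connected)
    (hS : isGenPosSet (compPrism G) (Sum.inl '' A ∪ Sum.inr '' B)) {v a : V} (hvA : v ∈ A)
    (hvB : v ∈ B) (ha : a ∈ A) (hav : a ≠ v) : G.dist a v = 2 := by
  have := compPrism_dist_eq_two_of_swap_mem hS (x := .inl v) (w := .inl a) (by simpa)
    (by simpa) (by simpa) (by simpa) (by simp)
  rw [compPrism_dist_inl_inl hG hav] at this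
  omega

lemma dist_eq_two_of_isGenPosSet_compPrism_inr (hGc : Gᶜ.Connected)
    (hS : isGenPosSet (compPrism G) (Sum.inl '' A ∪ Sum.inr '' B)) {v b : V} (hvA : v ∈ A)
    (hvB : v ∈ B) (hb : b ∈ B) (hbv : b ≠ v) : Gᶜ.dist b v = 2 := by
  have := compPrism_dist_eq_two_of_swap_mem hS (x := .inr v) (w := .inr b) (by simpa)
    (by simpa) (by simpa) (by simpa) (by simp)
  rw [compPrism_dist_inr_inr hGc hbv] at this
  omega

theorem isGenPosSet_compPrism_iff (hG : G.Connected) (hGc : Gᶜ.Connected) {v : V}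
    (hvA : v ∈ A) (hvB : v ∈ B) :
    isGenPosSet (compPrism G) (Sum.inl '' A ∪ Sum.inr '' B) ↔
      isGP3Set G A ∧ isGP3Set Gᶜ B ∧ (∀ a ∈ A, a ≠ v → G.dist a v = 2) ∧
        (∀ b ∈ B, b ≠ v → Gᶜ.dist b v = 2) :=
  ⟨fun hS => ⟨isGP3Set_of_isGenPosSet_compPrism_inl hG hS,
      isGP3Set_of_isGenPosSet_compPrism_inr hGc hS,
      fun _ ha hav => dist_eq_two_of_isGenPosSet_compPrism_inl hG hS hvA hvB ha hav,
      fun _ hb hbv => dist_eq_two_of_isGenPosSet_compPrism_inr hGc hS hvA hvB hb hbv⟩,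
    fun ⟨hA, hB, hAv, hBv⟩ => isGenPosSet_compPrism_of hG hGc hA hB hAv hBv⟩

end GenPos

section GpNum

variable {V : Type*} [Finite V] {H : SimpleGraph V}

variable (H) in
lemma bddAbove_ncard_isGenPosSet :
    BddAbove {n : ℕ | ∃ S : Set V, isGenPosSet H S ∧ S.ncard = n} :=
  ⟨Nat.card V, by rintro _ ⟨S, -, rfl⟩; exact S.ncard_le_card⟩

lemma le_gpNum {S : Set V} (hS : isGenPosSet H S) : S.ncard ≤ gpNum H :=
  le_csSup (bddAbove_ncard_isGenPosSet H) ⟨S, hS, rfl⟩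

variable (H) in
lemma exists_isGenPosSet_ncard_eq_gpNum :
    ∃ S : Set V, isGenPosSet H S ∧ S.ncard = gpNum H :=
  Nat.sSup_mem (s := {n | ∃ S : Set V, isGenPosSet H S ∧ S.ncard = n})
    ⟨0, ∅, by simp [isGenPosSet], Set.ncard_empty V⟩ (bddAbove_ncard_isGenPosSet H)

lemma gpNum_eq_iff_of_forall_ncard_le {k : ℕ} (h : ∀ S, isGenPosSet H S → S.ncard ≤ k) :
    gpNum H = k ↔ ∃ S : Set V, isGenPosSet H S ∧ S.ncard = k := by
  refine ⟨fun hk => hk ▸ exists_isGenPosSet_ncard_eq_gpNum H, ?_⟩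
  rintro ⟨S, hS, hSk⟩
  obtain ⟨T, hT, hTeq⟩ := exists_isGenPosSet_ncard_eq_gpNum H
  exact le_antisymm (hTeq ▸ h T hT) (hSk ▸ le_gpNum hS)

end GpNum

section Card

variable {V : Type*} [Finite V] {A B : Set V}

lemma ncard_add_ncard_le_card_add_one (hAB : (A ∩ B).Subsingleton) :
    A.ncard + B.ncard ≤ Nat.card V + 1 := by
  rw [← Set.ncard_union_add_ncard_inter]
  have := (A ∪ B).ncard_le_card
  have := Set.ncard_le_one_iff_subsingleton.mpr hAB
  omega

lemma ncard_add_ncard_eq_card_add_one_iff (hAB : (A ∩ B).Subsingleton) :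
    A.ncard + B.ncard = Nat.card V + 1 ↔ A ∪ B = Set.univ ∧ (A ∩ B).Nonempty := by
  rw [← Set.ncard_union_add_ncard_inter, ← Set.ncard_pos]
  have := (A ∪ B).ncard_le_card
  have := Set.ncard_le_one_iff_subsingleton.mpr hAB
  constructor
  · intro h
    refine ⟨by_contra fun hU => ?_, by omega⟩
    have := Set.ncard_lt_card hU
    omega
  · rintro ⟨hU, hI⟩
    rw [hU, Set.ncard_univ]
    omega

end Card

section GpNumCompPrism

variable {V : Type*} [Finite V] {G : SimpleGraph V}

theorem gpNum_compPrism_eq_card_add_one_iff :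
    gpNum (compPrism G) = Nat.card V + 1 ↔ ∃ A B : Set V,
      isGenPosSet (compPrism G) (Sum.inl '' A ∪ Sum.inr '' B) ∧ A ∪ B = Set.univ ∧
        (A ∩ B).Nonempty := by
  have hsplit := Set.image_preimage_inl_union_image_preimage_inr (α := V) (β := V)
  rw [gpNum_eq_iff_of_forall_ncard_le fun S hS => by
    rw [← hsplit S] at hS ⊢
    rw [ncard_image_inl_union_image_inr]
    exact ncard_add_ncard_le_card_add_one (inter_subsingleton_of_isGenPosSet_compPrism hS)]
  constructor
  · rintro ⟨S, hS, hcard⟩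
    rw [← hsplit S] at hS hcard
    rw [ncard_image_inl_union_image_inr,
      ncard_add_ncard_eq_card_add_one_iff (inter_subsingleton_of_isGenPosSet_compPrism hS)]
      at hcard
    exact ⟨_, _, hS, hcard⟩
  · rintro ⟨A, B, hS, hAB⟩
    refine ⟨_, hS, ?_⟩
    rw [ncard_image_inl_union_image_inr,
      ncard_add_ncard_eq_card_add_one_iff (inter_subsingleton_of_isGenPosSet_compPrism hS)]
    exact hAB

end GpNumCompPrism

section Eccentricity

variable {V : Type*} {G : SimpleGraph V}

variable (G) in
lemma dist_le_ecc [Finite V] (v u : V) : G.dist v u ≤ ecc G v :=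
  le_csSup (Set.finite_range _).bddAbove ⟨u, rfl⟩

lemma ecc_le_iff [Finite V] {v : V} {k : ℕ} : ecc G v ≤ k ↔ ∀ u, G.dist v u ≤ k :=
  ⟨fun h u => (dist_le_ecc G v u).trans h,
    fun h => csSup_le ⟨_, v, rfl⟩ (by rintro _ ⟨u, rfl⟩; exact h u)⟩

lemma two_le_ecc [Finite V] [Nontrivial V] (hG : G.Connected) (hGc : Gᶜ.Connected) (u : V) :
    2 ≤ ecc G u := by
  obtain ⟨w, hw⟩ := hGc.preconnected.exists_adj_of_nontrivial u
  rw [compl_adj] at hw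
  exact (hG.one_lt_dist_of_ne_of_not_adj hw.1 hw.2).trans_le (dist_le_ecc G u w)

lemma rad_eq_of_ecc_eq {k : ℕ} {v : V} (h : ∀ u, k ≤ ecc G u) (hv : ecc G v = k) :
    rad G = k :=
  le_antisymm (hv ▸ Nat.sInf_le ⟨v, rfl⟩) (le_csInf ⟨_, v, rfl⟩ (by rintro _ ⟨u, rfl⟩; exact h u))

end Eccentricity

section Hub

variable {V : Type*} {G : SimpleGraph V} {v : V}

lemma adj_of_compl_dist_eq_two {u : V} (h : Gᶜ.dist u v = 2) : G.Adj u v := by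
  obtain ⟨huv, hnadj, -⟩ := dist_eq_two_iff.mp h
  by_contra hadj
  exact hnadj ((compl_adj G u v).mpr ⟨huv, hadj⟩)

lemma dist_eq_two_iff_of_forall_dist_le_two (hG : G.Connected) (hv : ∀ u, G.dist u v ≤ 2)
    {u : V} : G.dist u v = 2 ↔ u ≠ v ∧ ¬G.Adj u v :=
  ⟨fun h => ⟨(dist_eq_two_iff.mp h).1, (dist_eq_two_iff.mp h).2.1⟩,
    fun ⟨hne, hnadj⟩ => le_antisymm (hv u) (hG.one_lt_dist_of_ne_of_not_adj hne hnadj)⟩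

lemma compl_dist_eq_two_iff (hG : G.Connected) (hv : ∀ u, G.dist u v ≤ 2) {x : V}
    (hx : G.Adj x v) :
    Gᶜ.dist x v = 2 ↔ ∃ y ∈ {u : V | G.dist u v = 2}, ¬G.Adj x y := by
  simp only [dist_eq_two_iff, Set.Nonempty, mem_commonNeighbors, compl_adj, Set.mem_ofPred_eq,
    dist_eq_two_iff_of_forall_dist_le_two hG hv]
  constructor
  · rintro ⟨-, -, y, ⟨-, hxy⟩, hvy, hnvy⟩
    exact ⟨y, ⟨Ne.symm hvy, fun h => hnvy h.symm⟩, hxy⟩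
  · rintro ⟨y, ⟨hyv, hnyv⟩, hxy⟩
    refine ⟨G.ne_of_adj hx, fun h => h.2 hx, y, ⟨?_, hxy⟩, Ne.symm hyv, fun h => hnyv h.symm⟩
    rintro rfl
    exact hnyv hx

theorem ecc_eq_two_and_hub_of_isGenPosSet [Finite V] [Nontrivial V] (hG : G.Connected)
    (hGc : Gᶜ.Connected) {A B : Set V} (hU : A ∪ B = Set.univ) (hA : isGP3Set G A)
    (hB : isGP3Set Gᶜ B) (hAv : ∀ a ∈ A, a ≠ v → G.dist a v = 2)
    (hBv : ∀ b ∈ B, b ≠ v → Gᶜ.dist b v = 2) :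
    ecc G v = 2 ∧ (isGP3Set Gᶜ (G.neighborSet v) ∧ isGP3Set G {u : V | G.dist u v = 2}) ∧
      ∀ x ∈ G.neighborSet v, ∃ y ∈ {u : V | G.dist u v = 2}, ¬G.Adj x y := by
  have hmem : ∀ u, u ≠ v → (u ∈ A ∧ G.dist u v = 2) ∨ (u ∈ B ∧ G.Adj u v) := fun u huv =>
    (hU ▸ Set.mem_univ u : u ∈ A ∪ B).imp (fun h => ⟨h, hAv u h huv⟩)
      (fun h => ⟨h, adj_of_compl_dist_eq_two (hBv u h huv)⟩)
  have hle : ∀ u, G.dist u v ≤ 2 := by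
    intro u
    rcases eq_or_ne u v with rfl | huv
    · simp
    rcases hmem u huv with ⟨-, h⟩ | ⟨-, h⟩
    · exact h.le
    · rw [dist_eq_one_iff_adj.mpr h]
      omega
  have hN : G.neighborSet v ⊆ B := fun x hx =>
    ((hmem x (G.ne_of_adj hx).symm).resolve_left fun h => (dist_eq_two_iff.mp h.2).2.1 hx.symm).1
  have hN2 : {u : V | G.dist u v = 2} ⊆ A := fun u hu =>
    ((hmem u (dist_eq_two_iff.mp hu).1).resolve_right fun h => (dist_eq_two_iff.mp hu).2.1 h.2).1
  refine ⟨le_antisymm (ecc_le_iff.mpr fun u => G.dist_comm ▸ hle u) (two_le_ecc hG hGc v),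
    ⟨hB.mono hN, hA.mono hN2⟩, fun x hx => ?_⟩
  exact (compl_dist_eq_two_iff hG hle hx.symm).mp (hBv x (hN hx) (G.ne_of_adj hx).symm)

theorem isGenPosSet_compPrism_of_hub (hG : G.Connected) (hGc : Gᶜ.Connected)
    (hv : ∀ u, G.dist u v ≤ 2) (hN : isGP3Set Gᶜ (G.neighborSet v))
    (hN2 : isGP3Set G {u : V | G.dist u v = 2})
    (hii : ∀ x ∈ G.neighborSet v, ∃ y ∈ {u : V | G.dist u v = 2}, ¬G.Adj x y) :
    isGenPosSet (compPrism G)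
      (Sum.inl '' {u | ¬G.Adj v u} ∪ Sum.inr '' insert v (G.neighborSet v)) := by
  have hdist : ∀ {u}, u ≠ v → ¬G.Adj v u → G.dist u v = 2 := fun huv hnadj =>
    (dist_eq_two_iff_of_forall_dist_le_two hG hv).mpr ⟨huv, fun h => hnadj h.symm⟩
  have hA : {u | ¬G.Adj v u} = insert v {u : V | G.dist u v = 2} := by
    ext u
    rcases eq_or_ne u v with rfl | huv
    · simp
    · simp only [Set.mem_ofPred_eq, Set.mem_insert_iff, huv, false_or]
      exact ⟨hdist huv, fun h h' => (dist_eq_two_iff.mp h).2.1 h'.symm⟩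
  have hNdist : ∀ x ∈ G.neighborSet v, Gᶜ.dist x v = 2 := fun x hx =>
    (compl_dist_eq_two_iff hG hv hx.symm).mpr (hii x hx)
  refine (isGenPosSet_compPrism_iff hG hGc (v := v) (by simp) (by simp)).mpr
    ⟨hA ▸ hN2.insert fun _ => id, hN.insert hNdist, fun a ha hav => hdist hav ha, ?_⟩
  rintro b (rfl | hb) hbv
  · exact (hbv rfl).elim
  · exact hNdist b hb

end Hub

/-- For `G` with `n(G) ≥ 2` such that both `G` and `Gᶜ` are connected:
`gp(G\bar{G}) = n(G) + 1` iff `rad(G) = 2` and there is a vertex `v` of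
eccentricity `2` such that (i) `N_G(v)` is a `3`-general position set of `Gᶜ` and
`N_G²(v)` is a `3`-general position set of `G`, and (ii) every `x ∈ N_G(v)` has a
non-neighbour `y ∈ N_G²(v)`. -/
theorem gp_compPrism_eq_iff {V : Type*} [Fintype V] (G : SimpleGraph V)
    (hn : 2 ≤ Fintype.card V) (hG : G.Connected) (hGc : Gᶜ.Connected) :
    gpNum (compPrism G) = Fintype.card V + 1 ↔
      (rad G = 2 ∧ ∃ v : V, ecc G v = 2 ∧
        (isGP3Set Gᶜ (G.neighborSet v) ∧ isGP3Set G {u : V | G.dist u v = 2}) ∧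
        (∀ x ∈ G.neighborSet v, ∃ y ∈ {u : V | G.dist u v = 2}, ¬ G.Adj x y)) := by
  have : Nontrivial V := Fintype.one_lt_card_iff_nontrivial.mp hn
  rw [← Nat.card_eq_fintype_card, gpNum_compPrism_eq_card_add_one_iff]
  constructor
  · rintro ⟨A, B, hS, hU, v, hvA, hvB⟩
    obtain ⟨hA, hB, hAv, hBv⟩ := (isGenPosSet_compPrism_iff hG hGc hvA hvB).mp hS
    obtain ⟨hecc, hgp, hii⟩ := ecc_eq_two_and_hub_of_isGenPosSet hG hGc hU hA hB hAv hBv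
    exact ⟨rad_eq_of_ecc_eq (two_le_ecc hG hGc) hecc, v, hecc, hgp, hii⟩
  · rintro ⟨-, v, hecc, ⟨hN, hN2⟩, hii⟩
    have hv : ∀ u, G.dist u v ≤ 2 := fun u => G.dist_comm ▸ ecc_le_iff.mp hecc.le u
    refine ⟨_, _, isGenPosSet_compPrism_of_hub hG hGc hv hN hN2 hii, ?_, v, by simp, by simp⟩
    ext u
    by_cases h : G.Adj v u <;> simp [h]
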